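/- The linear map F : ℝ⁷ → ℝ³ given by F(x₁,x₂,x₃,y₁,y₂,y₃,z) = ((x₂ - y₃)/√2, y₂, z) is surjective with ker F = span{∂/∂x₁, ∂/∂y₁, ∂/∂x₂ + ∂/∂y₃, ∂/∂x₃}; moreover φ(∂/∂x₁) = -∂/∂y₁ and φ(∂/∂y₁) = ∂/∂x₁ (so D₁ = span{∂/∂x₁, ∂/∂y₁} satisfies φ(D₁) = D₁), and D₂ = span{∂/∂x₂ + ∂/∂y₃, ∂/∂x₃} is slant with angle π/4: with respect to the standard Euclidean inner product on ℝ⁷, for every nonzero W ∈ D₂ the orthogonal projection P(φW) of φ(W) onto D₂ satisfies ‖P(φW)‖ = cos(π/4)·‖φ(W)‖. -/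

import Mathlib

open Real

/-- The tensor `φ` of the standard Sasakian structure on `ℝ⁷` (coordinates ordered
`(x₁,x₂,x₃,y₁,y₂,y₃,z)`): it sends `(X₁,X₂,X₃,Y₁,Y₂,Y₃,Z)` to `(Y₁,Y₂,Y₃,-X₁,-X₂,-X₃,0)`. -/
noncomputable def phi7 (v : EuclideanSpace ℝ (Fin 7)) : EuclideanSpace ℝ (Fin 7) :=
  WithLp.toLp 2 ![v 3, v 4, v 5, -v 0, -v 1, -v 2, 0]

/-- The submersion `F : ℝ⁷ → ℝ³`, `F(x₁,x₂,x₃,y₁,y₂,y₃,z) = ((x₂ - y₃)/√2, y₂, z)`. -/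
noncomputable def F7 : EuclideanSpace ℝ (Fin 7) →ₗ[ℝ] (Fin 3 → ℝ) where
  toFun v := ![(v 1 - v 5) / Real.sqrt 2, v 4, v 6]
  map_add' u v := by
    funext i; fin_cases i <;> simp <;> ring
  map_smul' c v := by
    funext i; fin_cases i <;> simp <;> ring

/-- `∂/∂x₁`. -/
noncomputable def W₁ : EuclideanSpace ℝ (Fin 7) := WithLp.toLp 2 ![1, 0, 0, 0, 0, 0, 0]

/-- `∂/∂y₁`. -/
noncomputable def W₂ : EuclideanSpace ℝ (Fin 7) := WithLp.toLp 2 ![0, 0, 0, 1, 0, 0, 0]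

/-- `∂/∂x₂ + ∂/∂y₃`. -/
noncomputable def W₃ : EuclideanSpace ℝ (Fin 7) := WithLp.toLp 2 ![0, 1, 0, 0, 0, 1, 0]

/-- `∂/∂x₃`. -/
noncomputable def W₄ : EuclideanSpace ℝ (Fin 7) := WithLp.toLp 2 ![0, 0, 1, 0, 0, 0, 0]

/-- `D₁ = span{∂/∂x₁, ∂/∂y₁}`. -/
noncomputable def D₁ : Submodule ℝ (EuclideanSpace ℝ (Fin 7)) := Submodule.span ℝ {W₁, W₂}

/-- `D₂ = span{∂/∂x₂ + ∂/∂y₃, ∂/∂x₃}`. -/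
noncomputable def D₂ : Submodule ℝ (EuclideanSpace ℝ (Fin 7)) := Submodule.span ℝ {W₃, W₄}

/-!
For `W = a W₃ + b W₄ ∈ D₂` one has `φW = a ∂/∂x₃ - a ∂/∂y₂ - b ∂/∂y₃`, whose projection onto `D₂`
is `a W₄ - (b/2) W₃`; as `W₃ ⊥ W₄` with `‖W₃‖² = 2`, its squared norm `a² + b²/2` is half of
`‖φW‖² = ‖W‖² = 2a² + b²`, which is the slant angle `π/4`.
-/

local notation "E" => EuclideanSpace ℝ (Fin 7)

theorem LinearMap.image_span_pair_eq_of_apply_eq_neg {R M : Type*} [Ring R] [AddCommGroup M]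
    [Module R M] (f : M →ₗ[R] M) {x y : M} (hx : f x = -y) (hy : f y = x) :
    f '' Submodule.span R {x, y} = Submodule.span R {x, y} := by
  rw [← Submodule.map_coe, Submodule.map_span, Set.image_pair, hx, hy, Set.pair_comm,
    Submodule.span_insert, Submodule.span_insert, ← Set.neg_singleton, Submodule.span_neg]

theorem eq_cos_pi_div_four_mul_of_two_mul_sq_eq {x y : ℝ} (hx : 0 ≤ x) (hy : 0 ≤ y)
    (h : 2 * x ^ 2 = y ^ 2) : x = cos (π / 4) * y := by
  have h2 : √2 ^ 2 = 2 := sq_sqrt zero_le_two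
  rw [cos_pi_div_four]
  refine (pow_left_inj₀ hx (by positivity) two_ne_zero).1 ?_
  nlinarith

noncomputable def phi7Linear : E →ₗ[ℝ] E where
  toFun := phi7
  map_add' u v := by ext i; fin_cases i <;> simp [phi7] <;> ring
  map_smul' c v := by ext i; fin_cases i <;> simp [phi7]

theorem phi7_W₁ : phi7 W₁ = -W₂ := by ext i; fin_cases i <;> simp [phi7, W₁, W₂]

theorem phi7_W₂ : phi7 W₂ = W₁ := by ext i; fin_cases i <;> simp [phi7, W₁, W₂]

theorem F7_apply (v : E) : F7 v = ![(v 1 - v 5) / √2, v 4, v 6] := rfl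

theorem F7_surjective : Function.Surjective F7 := by
  intro w
  refine ⟨WithLp.toLp 2 ![0, √2 * w 0, 0, 0, w 1, 0, w 2], ?_⟩
  ext i; fin_cases i <;> simp [F7_apply]

theorem mem_ker_F7 {v : E} : v ∈ LinearMap.ker F7 ↔ v 1 = v 5 ∧ v 4 = 0 ∧ v 6 = 0 := by
  simp [F7_apply, funext_iff, Fin.forall_fin_succ, sub_eq_zero]

theorem ker_F7 : LinearMap.ker F7 = Submodule.span ℝ {W₁, W₂, W₃, W₄} := by
  apply le_antisymm
  · intro v hv
    obtain ⟨h15, h4, h6⟩ := mem_ker_F7.1 hv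
    have hv : v = v 0 • W₁ + v 3 • W₂ + v 1 • W₃ + v 2 • W₄ := by
      ext i; fin_cases i <;> simp [W₁, W₂, W₃, W₄, h15, h4, h6]
    rw [hv]
    refine add_mem (add_mem (add_mem ?_ ?_) ?_) ?_ <;>
      exact Submodule.smul_mem _ _ (Submodule.subset_span (by simp))
  · rw [Submodule.span_le]
    rintro w (rfl | rfl | rfl | rfl) <;>
      (rw [SetLike.mem_coe, mem_ker_F7]; simp [W₁, W₂, W₃, W₄])

theorem phi7_smul_W₃_add_smul_W₄ (a b : ℝ) :
    phi7 (a • W₃ + b • W₄) = WithLp.toLp 2 ![0, 0, a, 0, -a, -b, 0] := by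
  ext i; fin_cases i <;> simp [phi7, W₃, W₄]

theorem norm_sq_smul_W₃_add_smul_W₄ (a b : ℝ) : ‖a • W₃ + b • W₄‖ ^ 2 = 2 * a ^ 2 + b ^ 2 := by
  simp [EuclideanSpace.real_norm_sq_eq, Fin.sum_univ_seven, W₃, W₄]; ring

theorem norm_sq_phi7 (v : E) : ‖phi7 v‖ ^ 2 = ‖v‖ ^ 2 - v 6 ^ 2 := by
  simp [EuclideanSpace.real_norm_sq_eq, Fin.sum_univ_seven, phi7]; ring

theorem starProjection_D₂_phi7 (a b : ℝ) :
    D₂.starProjection (phi7 (a • W₃ + b • W₄)) = (-b / 2) • W₃ + a • W₄ := by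
  refine Submodule.eq_starProjection_of_mem_of_inner_eq_zero
    (Submodule.mem_span_pair.2 ⟨_, _, rfl⟩) ?_
  rintro w hw
  obtain ⟨c, d, rfl⟩ := Submodule.mem_span_pair.1 hw
  rw [phi7_smul_W₃_add_smul_W₄]
  simp [PiLp.inner_apply, Fin.sum_univ_seven, W₃, W₄]
  ring

theorem norm_orthogonalProjectionOnto_D₂_phi7 {W : E} (hW : W ∈ D₂) :
    ‖(D₂.orthogonalProjectionOnto (phi7 W) : E)‖ = cos (π / 4) * ‖phi7 W‖ := by
  obtain ⟨a, b, rfl⟩ := Submodule.mem_span_pair.1 hW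
  refine eq_cos_pi_div_four_mul_of_two_mul_sq_eq (norm_nonneg _) (norm_nonneg _) ?_
  have hz : (a • W₃ + b • W₄) 6 = 0 := by simp [W₃, W₄]
  rw [Submodule.coe_orthogonalProjectionOnto_apply, starProjection_D₂_phi7, norm_sq_phi7, hz,
    norm_sq_smul_W₃_add_smul_W₄, norm_sq_smul_W₃_add_smul_W₄]
  ring

/-- `F : ℝ⁷ → ℝ³`, `F(x₁,x₂,x₃,y₁,y₂,y₃,z) = ((x₂-y₃)/√2, y₂, z)`, is
surjective with `ker F = span{∂/∂x₁, ∂/∂y₁, ∂/∂x₂ + ∂/∂y₃, ∂/∂x₃}`; moreover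
`φ(∂/∂x₁) = -∂/∂y₁` and `φ(∂/∂y₁) = ∂/∂x₁` (so `D₁ = span{∂/∂x₁, ∂/∂y₁}` satisfies
`φ(D₁) = D₁`), and `D₂ = span{∂/∂x₂ + ∂/∂y₃, ∂/∂x₃}` is slant with angle `π/4`: for every
nonzero `W ∈ D₂` the orthogonal projection `P(φW)` of `φ(W)` onto `D₂` satisfies
`‖P(φW)‖ = cos(π/4)·‖φ(W)‖`. -/
theorem F7_semi_slant :
    Function.Surjective F7 ∧
    LinearMap.ker F7 = Submodule.span ℝ {W₁, W₂, W₃, W₄} ∧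
    phi7 W₁ = -W₂ ∧ phi7 W₂ = W₁ ∧
    phi7 '' (D₁ : Set (EuclideanSpace ℝ (Fin 7))) = (D₁ : Set (EuclideanSpace ℝ (Fin 7))) ∧
    (∀ W ∈ D₂, W ≠ 0 →
      ‖(D₂.orthogonalProjectionOnto (phi7 W) : EuclideanSpace ℝ (Fin 7))‖ =
        Real.cos (π / 4) * ‖phi7 W‖) :=
  ⟨F7_surjective, ker_F7, phi7_W₁, phi7_W₂,
    phi7Linear.image_span_pair_eq_of_apply_eq_neg phi7_W₁ phi7_W₂,
    fun _ hW _ => norm_orthogonalProjectionOnto_D₂_phi7 hW⟩
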